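/- arXiv:2006.06470 — 7 statements merged into one kernel-verified Lean document; each statement's English description precedes it below -/
import Mathlib

section
/- Let G be a locally compact Polish abelian topological group and let H be a subgroup of G which is a Borel set and whose index in G is at most countable. Then H is open in G. -/
/-!
Countably many cosets of `H` cover a nonempty open set `U` of finite Haar measure, so some coset
meets `U` in positive measure; translating back gives a measurable `E ⊆ H` of finite positive
Haar measure. By Steinhaus' theorem `E / E ⊆ H` is a neighbourhood of `1`, so `H` is open.
-/

open MeasureTheory Pointwise

namespace Subgroup

variable {G : Type*} [Group G]

theorem exists_measure_inter_smul_pos [MeasurableSpace G] (H : Subgroup G) [Countable (G ⧸ H)]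
    {μ : Measure G} {s : Set G} (hs : 0 < μ s) : ∃ q : G ⧸ H, 0 < μ (s ∩ q.out • (H : Set G)) := by
  by_contra! h
  have hcover : s = ⋃ q : G ⧸ H, s ∩ q.out • (H : Set G) := by
    rw [← Set.inter_iUnion, ← QuotientGroup.univ_eq_iUnion_smul, Set.inter_univ]
  exact hs.ne' (hcover ▸ measure_iUnion_null fun q => nonpos_iff_eq_zero.1 (h q))

variable [TopologicalSpace G] [IsTopologicalGroup G] [MeasurableSpace G] [BorelSpace G]

theorem isOpen_of_subset_of_haar_pos_ne_top (H : Subgroup G) (μ : Measure G) [μ.IsHaarMeasure]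
    [μ.InnerRegularCompactLTTop] [LocallyCompactSpace G] {E : Set G} (hEH : E ⊆ H)
    (hE : MeasurableSet E) (hEpos : 0 < μ E) (hEfin : μ E ≠ ⊤) : IsOpen (H : Set G) := by
  have hdiv : E / E ⊆ H := Set.div_subset_iff.2 fun _ ha _ hb => H.div_mem (hEH ha) (hEH hb)
  exact H.isOpen_of_mem_nhds <| Filter.mem_of_superset
    (Measure.div_mem_nhds_one_of_haar_pos_ne_top μ E hE hEpos hEfin) hdiv

end Subgroup

theorem borel_subgroup_of_countable_index_isOpen_general
    {G : Type*} [CommGroup G] [TopologicalSpace G] [IsTopologicalGroup G]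
    [LocallyCompactSpace G]
    [MeasurableSpace G] [BorelSpace G]
    (H : Subgroup G) (hBorel : MeasurableSet (H : Set G))
    (hIndex : Countable (G ⧸ H)) :
    IsOpen (H : Set G) := by
  let μ : Measure G := Measure.haar
  obtain ⟨K, hK, hK1⟩ := exists_compact_mem_nhds (1 : G)
  let U := interior K
  have hUpos : 0 < μ U := isOpen_interior.measure_pos μ ⟨1, mem_interior_iff_mem_nhds.2 hK1⟩
  have hUfin : μ U ≠ ⊤ := (measure_mono interior_subset).trans_lt hK.measure_lt_top |>.ne
  obtain ⟨q, hq⟩ := H.exists_measure_inter_smul_pos hUpos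
  have htranslate : μ (q.out⁻¹ • U ∩ H) = μ (U ∩ q.out • (H : Set G)) := by
    rw [← measure_smul μ q.out, Set.smul_set_inter, smul_inv_smul]
  refine H.isOpen_of_subset_of_haar_pos_ne_top μ (E := q.out⁻¹ • U ∩ H) Set.inter_subset_right
    ((isOpen_interior.smul _).measurableSet.inter hBorel) (htranslate ▸ hq) ?_
  rw [htranslate]
  exact ((measure_mono Set.inter_subset_left).trans_lt hUfin.lt_top).ne

/-- Let `G` be a locally compact Polish abelian topological group and let
`H` be a subgroup of `G` which is a Borel set and whose index in `G` is at most countable.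
Then `H` is open in `G`. -/
theorem borel_subgroup_of_countable_index_isOpen
    {G : Type*} [CommGroup G] [TopologicalSpace G] [IsTopologicalGroup G]
    [LocallyCompactSpace G] [PolishSpace G]
    [MeasurableSpace G] [BorelSpace G]
    (H : Subgroup G) (hBorel : MeasurableSet (H : Set G))
    (hIndex : Countable (G ⧸ H)) :
    IsOpen (H : Set G) :=
  borel_subgroup_of_countable_index_isOpen_general H hBorel hIndex
end

section
/- Let H be a compact abelian Hausdorff topological group (written additively), let n ≥ 1, and let φ : ℝⁿ → H be a Borel measurable map. Suppose there exists r > 0 such that, writing W = B(0, r) for the open Euclidean ball of radius r around 0, one has φ(v + w) = φ(v) + φ(w) for all v, w ∈ W. Then there exists a group homomorphism φ̃ : ℝⁿ → H such that φ̃(w) = φ(w) for every w ∈ W. -/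
/-! A map that is additive on the ball `B(0, r)` of a real normed space extends to a homomorphism
by `v ↦ k • φ (k⁻¹ • v)` for any `k : ℕ` with `‖v‖ < k * r`. The value does not depend on `k`,
because inside the ball `φ (m • u) = m • φ u`, so both choices `k` and `l` agree with `k * l`. -/

open Metric

section BallExtension

variable {E G : Type*} [SeminormedAddCommGroup E] [NormedSpace ℝ E] [AddCommGroup G]
  {f : E → G} {r : ℝ}

lemma norm_inv_natCast_smul_lt {k : ℕ} (hk : 0 < k) {v : E} (hv : ‖v‖ < k * r) :
    ‖(k : ℝ)⁻¹ • v‖ < r := by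
  rwa [norm_smul, norm_inv, Real.norm_natCast, inv_mul_lt_iff₀ (by exact_mod_cast hk)]

variable (f r) in
noncomputable def ballExtension (v : E) : G :=
  (⌊‖v‖ / r⌋₊ + 1) • f (((⌊‖v‖ / r⌋₊ + 1 : ℕ) : ℝ)⁻¹ • v)

variable (hf : ∀ v w : E, v ∈ ball 0 r → w ∈ ball 0 r → f (v + w) = f v + f w)
include hf

lemma map_nsmul_of_add_on_ball : ∀ (l : ℕ) (u : E), l * ‖u‖ < r → f (l • u) = l • f u
  | 0, u, h => by
    have hr : 0 < r := by simpa using h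
    simpa using hf 0 0 (mem_ball_self hr) (mem_ball_self hr)
  | l + 1, u, h => by
    push_cast at h
    have hl : l * ‖u‖ < r := by linarith [norm_nonneg u]
    have hu : ‖u‖ < r := by nlinarith [norm_nonneg u, (Nat.cast_nonneg l : (0 : ℝ) ≤ l)]
    have hlu : l • u ∈ ball (0 : E) r := by
      rwa [mem_ball_zero_iff, ← Nat.cast_smul_eq_nsmul ℝ, norm_smul, Real.norm_natCast]
    rw [succ_nsmul, hf _ _ hlu (mem_ball_zero_iff.2 hu), map_nsmul_of_add_on_ball l u hl,
      succ_nsmul]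

lemma nsmul_map_inv_smul_eq_mul {k : ℕ} (m : ℕ) (hk : 0 < k) (hm : 0 < m) {v : E}
    (hkv : ‖v‖ < k * r) :
    k • f ((k : ℝ)⁻¹ • v) = (k * m) • f (((k * m : ℕ) : ℝ)⁻¹ • v) := by
  set u : E := ((k * m : ℕ) : ℝ)⁻¹ • v
  have hscale : (k : ℝ)⁻¹ • v = m • u := by
    rw [← Nat.cast_smul_eq_nsmul ℝ, smul_smul]
    congr 1
    push_cast
    field_simp
  have hmu : m * ‖u‖ < r := by
    rw [← Real.norm_natCast, ← norm_smul, Nat.cast_smul_eq_nsmul, ← hscale]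
    exact norm_inv_natCast_smul_lt hk hkv
  rw [hscale, map_nsmul_of_add_on_ball hf m u hmu, mul_nsmul']

lemma nsmul_map_inv_smul_eq {k l : ℕ} (hk : 0 < k) (hl : 0 < l) {v : E}
    (hkv : ‖v‖ < k * r) (hlv : ‖v‖ < l * r) :
    k • f ((k : ℝ)⁻¹ • v) = l • f ((l : ℝ)⁻¹ • v) := by
  rw [nsmul_map_inv_smul_eq_mul hf l hk hl hkv, nsmul_map_inv_smul_eq_mul hf k hl hk hlv,
    mul_comm]

lemma ballExtension_eq {k : ℕ} (hk : 0 < k) {v : E} (hkv : ‖v‖ < k * r) :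
    ballExtension f r v = k • f ((k : ℝ)⁻¹ • v) := by
  have hr : 0 < r := pos_of_mul_pos_right ((norm_nonneg v).trans_lt hkv) k.cast_nonneg
  refine nsmul_map_inv_smul_eq hf (Nat.succ_pos _) hk ?_ hkv
  rw [← div_lt_iff₀ hr, Nat.cast_add_one]
  exact Nat.lt_floor_add_one _

lemma ballExtension_add (hr : 0 < r) (v w : E) :
    ballExtension f r (v + w) = ballExtension f r v + ballExtension f r w := by
  obtain ⟨k, hk⟩ := exists_nat_gt ((‖v‖ + ‖w‖) / r)
  rw [div_lt_iff₀ hr] at hk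
  have hk0 : 0 < k := by
    exact_mod_cast pos_of_mul_pos_left ((by positivity : 0 ≤ ‖v‖ + ‖w‖).trans_lt hk) hr.le
  have hkv : ‖v‖ < k * r := by linarith [norm_nonneg w]
  have hkw : ‖w‖ < k * r := by linarith [norm_nonneg v]
  rw [ballExtension_eq hf hk0 ((norm_add_le v w).trans_lt hk), ballExtension_eq hf hk0 hkv,
    ballExtension_eq hf hk0 hkw, smul_add,
    hf _ _ (mem_ball_zero_iff.2 (norm_inv_natCast_smul_lt hk0 hkv))
      (mem_ball_zero_iff.2 (norm_inv_natCast_smul_lt hk0 hkw)), nsmul_add]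

lemma ballExtension_eq_of_mem_ball {v : E} (hv : v ∈ ball 0 r) : ballExtension f r v = f v := by
  rw [ballExtension_eq hf one_pos (by simpa using hv)]
  simp

end BallExtension

theorem lift_of_local_homomorphism_on_ball_general
    {H : Type*} [AddCommGroup H]
    {n : ℕ}
    (φ : EuclideanSpace ℝ (Fin n) → H)
    {r : ℝ} (hr : 0 < r)
    (hadd : ∀ v w : EuclideanSpace ℝ (Fin n),
      v ∈ Metric.ball (0 : EuclideanSpace ℝ (Fin n)) r →
      w ∈ Metric.ball (0 : EuclideanSpace ℝ (Fin n)) r →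
      φ (v + w) = φ v + φ w) :
    ∃ ψ : EuclideanSpace ℝ (Fin n) →+ H,
      ∀ w ∈ Metric.ball (0 : EuclideanSpace ℝ (Fin n)) r, ψ w = φ w :=
  ⟨AddMonoidHom.mk' (ballExtension φ r) (ballExtension_add hadd hr),
    fun _ hw => ballExtension_eq_of_mem_ball hadd hw⟩

/-- Let `H` be a compact abelian Hausdorff topological group (written
additively), let `n ≥ 1`, and let `φ : ℝⁿ → H` be a Borel measurable map.  Suppose there is
`r > 0` such that, writing `W = B(0, r)` for the open Euclidean ball of radius `r` around
`0`, one has `φ (v + w) = φ v + φ w` for all `v, w ∈ W`.  Then there is a group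
homomorphism `φ̃ : ℝⁿ → H` agreeing with `φ` on `W`. -/
theorem lift_of_local_homomorphism_on_ball
    {H : Type*} [AddCommGroup H] [TopologicalSpace H] [IsTopologicalAddGroup H]
    [CompactSpace H] [T2Space H] [MeasurableSpace H] [BorelSpace H]
    {n : ℕ} (hn : 1 ≤ n)
    (φ : EuclideanSpace ℝ (Fin n) → H) (hmeas : Measurable φ)
    {r : ℝ} (hr : 0 < r)
    (hadd : ∀ v w : EuclideanSpace ℝ (Fin n),
      v ∈ Metric.ball (0 : EuclideanSpace ℝ (Fin n)) r →
      w ∈ Metric.ball (0 : EuclideanSpace ℝ (Fin n)) r →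
      φ (v + w) = φ v + φ w) :
    ∃ ψ : EuclideanSpace ℝ (Fin n) →+ H,
      ∀ w ∈ Metric.ball (0 : EuclideanSpace ℝ (Fin n)) r, ψ w = φ w :=
  lift_of_local_homomorphism_on_ball_general φ hr hadd
end

section
/- Let G be a countable discrete abelian group, let X be an ergodic G-system, let d ≥ 0, and let q : G × X → S¹ be a measurable cocycle that is also a phase polynomial of degree < d. Then for every g ∈ G of finite order n, one has q(g, x)^(n^d) = 1 for μ-almost every x ∈ X. -/
open MeasureTheory
open scoped symmDiff

noncomputable instance : MeasurableSpace Circle := borel Circle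
instance : BorelSpace Circle := ⟨rfl⟩

/-- `φ : X → H` is a phase polynomial of degree `< k` with respect to the action `T` of `G`
on the measure space `(X, μ)`: all `k`-fold multiplicative derivatives
`Δ_{h₁} ⋯ Δ_{h_k} φ` equal `1` almost everywhere, where `Δ_g φ = (φ ∘ T_g) · φ⁻¹`. -/
def PhasePoly {G X H : Type*} [MeasurableSpace X] [CommGroup H]
    (T : G → X → X) (μ : Measure X) : ℕ → (X → H) → Prop
  | 0, φ => ∀ᵐ x ∂μ, φ x = 1
  | (k + 1), φ => ∀ g : G, PhasePoly T μ k (fun x => φ (T g x) * (φ x)⁻¹)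

/-- The action `T` of `G` on `(X, μ)` is ergodic: every measurable set that is invariant
modulo null sets under every `T g` has measure `0` or `1`. -/
def IsErgodicAction {G X : Type*} [MeasurableSpace X] (T : G → X → X)
    (μ : Measure X) : Prop :=
  ∀ A : Set X, MeasurableSet A → (∀ g : G, μ ((T g ⁻¹' A) ∆ A) = 0) → μ A = 0 ∨ μ A = 1

/-!
Induct on `d`. For every `h`, the derivative `(a, x) ↦ q(a, T_h x) / q(a, x)` is again a cocycle,
of degree `< d`, so by induction `F = q(g, ·) ^ (n ^ d)` is invariant under every `T_h`, hence
a.e. equal to a constant `c` by ergodicity. On the other hand the cocycle identity along the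
orbit gives `∏_{j < n} q(g, T_g^j x) = q(n • g, x) = q(0, x) = 1`; raising it to the power `n ^ d`
yields `c ^ n = 1`, i.e. `q(g, x) ^ (n ^ (d + 1)) = 1` a.e.
-/

theorem apply_nsmul_eq_iterate {G X : Type*} [AddMonoid G] {T : G → X → X} (hT0 : T 0 = id)
    (hTadd : ∀ g g', T (g + g') = T g ∘ T g') (g : G) (k : ℕ) : T (k • g) = (T g)^[k] := by
  induction k with
  | zero => simpa using hT0
  | succ k ih => rw [succ_nsmul, hTadd, ih, ← Function.iterate_succ]

section Cocycle

variable {G X H : Type*} [MeasurableSpace X] [CommGroup H] {μ : Measure X} {T : G → X → X}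

def IsCocycle [Add G] (T : G → X → X) (μ : Measure X) (r : G → X → H) : Prop :=
  ∀ g g', ∀ᵐ x ∂μ, r (g + g') x = r g x * r g' (T g x)

namespace IsCocycle

variable {r : G → X → H}

theorem ae_zero_eq_one [AddZeroClass G] (hr : IsCocycle T μ r) (hT0 : T 0 = id) :
    ∀ᵐ x ∂μ, r 0 x = 1 := by
  filter_upwards [hr 0 0] with x hx
  simpa [hT0] using hx

theorem ae_nsmul_eq_prod [AddMonoid G] (hr : IsCocycle T μ r) (hT0 : T 0 = id)
    (hTadd : ∀ g g', T (g + g') = T g ∘ T g') (g : G) (k : ℕ) :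
    ∀ᵐ x ∂μ, r (k • g) x = ∏ j ∈ Finset.range k, r g ((T g)^[j] x) := by
  induction k with
  | zero => simpa using hr.ae_zero_eq_one hT0
  | succ k ih =>
    filter_upwards [hr (k • g) g, ih] with x hsucc hk
    rw [succ_nsmul, hsucc, hk, Finset.prod_range_succ, apply_nsmul_eq_iterate hT0 hTadd]

theorem ae_prod_range_addOrderOf_eq_one [AddMonoid G] (hr : IsCocycle T μ r) (hT0 : T 0 = id)
    (hTadd : ∀ g g', T (g + g') = T g ∘ T g') (g : G) :
    ∀ᵐ x ∂μ, ∏ j ∈ Finset.range (addOrderOf g), r g ((T g)^[j] x) = 1 := by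
  filter_upwards [hr.ae_nsmul_eq_prod hT0 hTadd g (addOrderOf g), hr.ae_zero_eq_one hT0]
    with x hprod hzero
  rw [← hprod, addOrderOf_nsmul_eq_zero, hzero]

theorem derivative [AddCommMagma G] (hr : IsCocycle T μ r)
    (hTadd : ∀ g g', T (g + g') = T g ∘ T g') {h : G}
    (hTh : Measure.QuasiMeasurePreserving (T h) μ μ) :
    IsCocycle T μ fun a x => r a (T h x) * (r a x)⁻¹ := by
  intro a b
  filter_upwards [hr a b, hTh.ae (hr a b)] with x hx hTx
  have hcomm : T a (T h x) = T h (T a x) := by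
    rw [← Function.comp_apply (f := T a), ← hTadd, add_comm, hTadd, Function.comp_apply]
  rw [hTx, hx, hcomm]
  simp only [mul_inv]
  ac_rfl

end IsCocycle

end Cocycle

theorem IsErgodicAction.exists_ae_eq_const_of_ae_invariant {G X Y : Type*} [MeasurableSpace X]
    [MeasurableSpace Y] [MeasurableSpace.CountablySeparated Y] {T : G → X → X} {μ : Measure X}
    [IsProbabilityMeasure μ] (herg : IsErgodicAction T μ) {F : X → Y} (hF : Measurable F)
    (hinv : ∀ h, ∀ᵐ x ∂μ, F (T h x) = F x) : ∃ c, F =ᵐ[μ] fun _ => c := by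
  have : Nonempty Y := (nonempty_of_isProbabilityMeasure μ).map F
  refine Filter.exists_eventuallyEq_const_of_forall_separating MeasurableSet fun U hU => ?_
  have hnull : ∀ h, μ ((T h ⁻¹' (F ⁻¹' U)) ∆ (F ⁻¹' U)) = 0 := by
    intro h
    refine measure_mono_null (fun x hx => ?_) (ae_iff.mp (hinv h))
    simp only [Set.mem_symmDiff, Set.mem_preimage] at hx
    rintro (heq : F (T h x) = F x)
    rw [heq] at hx
    tauto
  rcases herg _ (hF hU) hnull with hzero | hone
  · exact Or.inr (ae_iff.mpr (by simp only [not_not]; exact hzero))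
  · exact Or.inl (ae_iff.mpr ((prob_compl_eq_zero_iff (hF hU)).mpr hone))

theorem ae_pow_addOrderOf_pow_eq_one {G X H : Type*} [AddCommMonoid G] [MeasurableSpace X]
    [CommGroup H] [MeasurableSpace H] [MeasurableMul₂ H] [MeasurableInv H]
    [MeasurableSpace.CountablySeparated H] {μ : Measure X} [IsProbabilityMeasure μ]
    {T : G → X → X} (hT : ∀ g, Measure.QuasiMeasurePreserving (T g) μ μ) (hT0 : T 0 = id)
    (hTadd : ∀ g g', T (g + g') = T g ∘ T g') (herg : IsErgodicAction T μ) (d : ℕ)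
    {q : G → X → H} (hqmeas : ∀ g, Measurable (q g)) (hq : IsCocycle T μ q)
    (hpoly : ∀ g, PhasePoly T μ d (q g)) (g : G) :
    ∀ᵐ x ∂μ, q g x ^ addOrderOf g ^ d = 1 := by
  set n := addOrderOf g
  induction d generalizing q with
  | zero =>
    filter_upwards [hpoly g] with x hx
    simp [hx]
  | succ d ih =>
    set F : X → H := fun x => q g x ^ n ^ d
    have hinv : ∀ h, ∀ᵐ x ∂μ, F (T h x) = F x := fun h => by
      have hmeas : ∀ a, Measurable fun x => q a (T h x) * (q a x)⁻¹ :=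
        fun a => ((hqmeas a).comp (hT h).measurable).mul (hqmeas a).inv
      filter_upwards [ih hmeas (hq.derivative hTadd (hT h)) (fun a => hpoly a h)] with x hx
      rwa [mul_pow, inv_pow, mul_inv_eq_one] at hx
    obtain ⟨c, hc⟩ := herg.exists_ae_eq_const_of_ae_invariant ((hqmeas g).pow_const _) hinv
    have horbit : ∀ᵐ x ∂μ, ∀ j : ℕ, F ((T g)^[j] x) = c :=
      ae_all_iff.mpr fun j => ((hT g).iterate j).ae hc
    filter_upwards [hq.ae_prod_range_addOrderOf_eq_one hT0 hTadd g, horbit, hc]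
      with x hprod hForbit hFx
    calc q g x ^ n ^ (d + 1) = c ^ n := by rw [pow_succ, pow_mul, hFx]
      _ = ∏ j ∈ Finset.range n, F ((T g)^[j] x) := by simp [hForbit]
      _ = 1 := by rw [Finset.prod_pow, hprod, one_pow]

theorem phase_polynomial_cocycle_values_general
    {G : Type*} [AddCommGroup G]
    {X : Type*} [MeasurableSpace X] (μ : Measure X) [IsProbabilityMeasure μ]
    (T : G → X → X)
    (hT : ∀ g, MeasurePreserving (T g) μ μ)
    (hT0 : T 0 = id) (hTadd : ∀ g g', T (g + g') = T g ∘ T g')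
    (herg : IsErgodicAction T μ)
    (d : ℕ) (q : G → X → Circle)
    (hqmeas : ∀ g, Measurable (q g))
    (hcoc : ∀ g g', ∀ᵐ x ∂μ, q (g + g') x = q g x * q g' (T g x))
    (hpoly : ∀ g, PhasePoly T μ d (q g))
    (g : G) (n : ℕ) (hn : addOrderOf g = n) :
    ∀ᵐ x ∂μ, (q g x) ^ (n ^ d) = 1 := by
  subst hn
  exact ae_pow_addOrderOf_pow_eq_one (fun g => (hT g).quasiMeasurePreserving) hT0 hTadd herg d
    hqmeas hcoc hpoly g

/-- Let `G` be a countable discrete abelian group, `X` an ergodic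
`G`-system, `d ≥ 0`, and `q : G × X → S¹` a measurable cocycle that is also a phase
polynomial of degree `< d`.  Then for every `g ∈ G` of finite order `n`, one has
`q (g, x) ^ (n ^ d) = 1` for almost every `x`. -/
theorem phase_polynomial_cocycle_values
    {G : Type*} [AddCommGroup G] [Countable G]
    {X : Type*} [MeasurableSpace X] (μ : Measure X) [IsProbabilityMeasure μ]
    (T : G → X → X)
    (hT : ∀ g, MeasurePreserving (T g) μ μ)
    (hT0 : T 0 = id) (hTadd : ∀ g g', T (g + g') = T g ∘ T g')
    (herg : IsErgodicAction T μ)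
    (d : ℕ) (q : G → X → Circle)
    (hqmeas : ∀ g, Measurable (q g))
    (hcoc : ∀ g g', ∀ᵐ x ∂μ, q (g + g') x = q g x * q g' (T g x))
    (hpoly : ∀ g, PhasePoly T μ d (q g))
    (g : G) (n : ℕ) (hn : addOrderOf g = n) (hn0 : 0 < n) :
    ∀ᵐ x ∂μ, (q g x) ^ (n ^ d) = 1 :=
  phase_polynomial_cocycle_values_general μ T hT hT0 hTadd herg d q hqmeas hcoc hpoly g n hn
end

section
/- Let G be a countable discrete abelian group, let X be an ergodic G-system, let d ≥ 1, and let u : X → X be a measure-preserving transformation that commutes with the G-action (u ∘ T_g = T_g ∘ u μ-a.e. for every g ∈ G). If P : X → S¹ is a phase polynomial of degree < d, then Δ_u P := (P ∘ u) · conj(P) is a phase polynomial of degree < d − 1. -/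
/-!
A phase polynomial of degree `< 1` is invariant, hence a.e. constant by ergodicity, so its
vertical derivative `Δ_u P` is a.e. `1`. For higher degree, since `u` commutes with the action,
`Δ_g (Δ_u P) = Δ_u (Δ_g P)` a.e., and `Δ_g P` has degree one less than `P`; induction on the
degree concludes.
-/

open MeasureTheory
open scoped symmDiff

/-- `PhasePoly T μ (k + 1) φ` unfolds to `∀ g, PhasePoly T μ k (mulDeriv (T g) φ)`. -/
def mulDeriv {X H : Type*} [CommGroup H] (S : X → X) (φ : X → H) : X → H :=
  fun x => φ (S x) * (φ x)⁻¹

section MulDeriv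

variable {X H : Type*} [CommGroup H]

theorem mulDeriv_mulDeriv_ae_eq_of_commute [MeasurableSpace X] {μ : Measure X} {u S : X → X}
    (hcomm : ∀ᵐ x ∂μ, u (S x) = S (u x)) (φ : X → H) :
    mulDeriv u (mulDeriv S φ) =ᵐ[μ] mulDeriv S (mulDeriv u φ) := by
  filter_upwards [hcomm] with x hx
  simp only [mulDeriv, hx, mul_inv, inv_inv]
  ac_rfl

theorem Measurable.mulDeriv [MeasurableSpace X] [MeasurableSpace H] [MeasurableMul₂ H]
    [MeasurableInv H] {S : X → X} {φ : X → H} (hφ : Measurable φ) (hS : Measurable S) :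
    Measurable (mulDeriv S φ) :=
  (hφ.comp hS).mul hφ.inv

end MulDeriv

theorem PhasePoly.congr_ae {G X H : Type*} [MeasurableSpace X] [CommGroup H] {μ : Measure X}
    {T : G → X → X} (hT : ∀ g, Measure.QuasiMeasurePreserving (T g) μ μ) :
    ∀ {k : ℕ} {φ ψ : X → H}, φ =ᵐ[μ] ψ → PhasePoly T μ k φ → PhasePoly T μ k ψ
  | 0, _, _, h, hφ => h.symm.trans hφ
  | _ + 1, _, _, h, hφ => fun g =>
    PhasePoly.congr_ae hT (((hT g).ae_eq h).mul h.inv) (hφ g)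

theorem IsErgodicAction.ae_eq_const_of_ae_invariant {G X Y : Type*} [MeasurableSpace X]
    {μ : Measure X} [IsProbabilityMeasure μ] {T : G → X → X} (herg : IsErgodicAction T μ)
    [MeasurableSpace Y] [Nonempty Y] [HasCountableSeparatingOn Y MeasurableSet Set.univ]
    {Q : X → Y} (hQ : Measurable Q) (hinv : ∀ g, ∀ᵐ x ∂μ, Q (T g x) = Q x) :
    ∃ c, Q =ᵐ[μ] Function.const X c := by
  refine Filter.exists_eventuallyEq_const_of_forall_separating MeasurableSet fun U hU => ?_
  have hA : MeasurableSet (Q ⁻¹' U) := hQ hU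
  have hAinv : ∀ g, μ ((T g ⁻¹' (Q ⁻¹' U)) ∆ (Q ⁻¹' U)) = 0 := by
    refine fun g => measure_mono_null ?_ (ae_iff.1 (hinv g))
    intro x hx hQx
    simp only [Set.mem_symmDiff, Set.mem_preimage, hQx, and_not_self, or_self] at hx
  rcases herg _ hA hAinv with h0 | h1
  · exact Or.inr (measure_eq_zero_iff_ae_notMem.1 h0)
  · exact Or.inl (ae_iff.2 ((prob_compl_eq_zero_iff hA).2 h1))

section VerticalDerivative

variable {G X H : Type*} [MeasurableSpace X] {μ : Measure X} [IsProbabilityMeasure μ]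
  {T : G → X → X} [CommGroup H] [MeasurableSpace H]
  [HasCountableSeparatingOn H MeasurableSet Set.univ]

theorem PhasePoly.ae_eq_const_of_one (herg : IsErgodicAction T μ) {P : X → H}
    (hPm : Measurable P) (hP : PhasePoly T μ 1 P) : ∃ c, P =ᵐ[μ] Function.const X c :=
  herg.ae_eq_const_of_ae_invariant hPm fun g => (hP g).mono fun _ hx => mul_inv_eq_one.1 hx

theorem PhasePoly.mulDeriv_of_succ [MeasurableMul₂ H] [MeasurableInv H]
    (hT : ∀ g, Measure.QuasiMeasurePreserving (T g) μ μ)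
    (herg : IsErgodicAction T μ) {u : X → X} (hu : Measure.QuasiMeasurePreserving u μ μ)
    (hcomm : ∀ g, ∀ᵐ x ∂μ, u (T g x) = T g (u x)) :
    ∀ {k : ℕ} {P : X → H}, Measurable P → PhasePoly T μ (k + 1) P →
      PhasePoly T μ k (mulDeriv u P)
  | 0, P, hPm, hP => by
    obtain ⟨c, hc⟩ := hP.ae_eq_const_of_one herg hPm
    filter_upwards [hc, hu.ae_eq hc] with x hx hux
    simp only [mulDeriv, Function.const, Function.comp_apply] at hx hux ⊢
    rw [hx, hux, mul_inv_cancel]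
  | k + 1, P, hPm, hP => fun g =>
    PhasePoly.congr_ae hT (mulDeriv_mulDeriv_ae_eq_of_commute (hcomm g) P)
      (PhasePoly.mulDeriv_of_succ hT herg hu hcomm (hPm.mulDeriv (hT g).measurable) (hP g))

end VerticalDerivative

theorem vertical_derivative_of_phase_polynomial_general
    {G : Type*}
    {X : Type*} [MeasurableSpace X] (μ : Measure X) [IsProbabilityMeasure μ]
    (T : G → X → X)
    (hT : ∀ g, MeasurePreserving (T g) μ μ)
    (herg : IsErgodicAction T μ)
    (u : X → X) (hu : MeasurePreserving u μ μ)
    (hcomm : ∀ g, ∀ᵐ x ∂μ, u (T g x) = T g (u x))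
    (d : ℕ) (hd : 1 ≤ d)
    (P : X → Circle) (hPmeas : Measurable P)
    (hP : PhasePoly T μ d P) :
    PhasePoly T μ (d - 1) (fun x => P (u x) * (P x)⁻¹) := by
  obtain ⟨k, rfl⟩ := Nat.exists_eq_add_of_le' hd
  exact PhasePoly.mulDeriv_of_succ (fun g => (hT g).quasiMeasurePreserving) herg
    hu.quasiMeasurePreserving hcomm hPmeas hP

/-- Let `G` be a countable discrete abelian group, `X` an ergodic
`G`-system, `d ≥ 1`, and `u : X → X` a measure-preserving transformation commuting with the
`G`-action almost everywhere.  If `P : X → S¹` is a phase polynomial of degree `< d`, then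
`Δ_u P = (P ∘ u) · conj P` is a phase polynomial of degree `< d - 1`. -/
theorem vertical_derivative_of_phase_polynomial
    {G : Type*} [AddCommGroup G] [Countable G]
    {X : Type*} [MeasurableSpace X] (μ : Measure X) [IsProbabilityMeasure μ]
    (T : G → X → X)
    (hT : ∀ g, MeasurePreserving (T g) μ μ)
    (hT0 : T 0 = id) (hTadd : ∀ g g', T (g + g') = T g ∘ T g')
    (herg : IsErgodicAction T μ)
    (u : X → X) (hu : MeasurePreserving u μ μ)
    (hcomm : ∀ g, ∀ᵐ x ∂μ, u (T g x) = T g (u x))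
    (d : ℕ) (hd : 1 ≤ d)
    (P : X → Circle) (hPmeas : Measurable P)
    (hP : PhasePoly T μ d P) :
    PhasePoly T μ (d - 1) (fun x => P (u x) * (P x)⁻¹) :=
  vertical_derivative_of_phase_polynomial_general μ T hT herg u hu hcomm d hd P hPmeas hP
end

section
/- Let G be a countable discrete abelian group, let X be an ergodic G-system, and let U be a compact metrizable abelian group acting on X by measure-preserving transformations (V_u)_{u∈U} commuting with the G-action, such that (u, x) ↦ V_u x is jointly measurable. Let d ≥ 1 and let f : U × X → S¹ be jointly measurable such that for each u ∈ U the function f_u := f(u, ·) is a phase polynomial of degree < d, and such that f_{uv}(x) = f_u(x) · f_v(V_u x) for all u, v ∈ U and μ-a.e. x. Then there exists an open subgroup V of U such that for every v ∈ V, f_v is a phase polynomial of degree < 1, i.e. Δ_g f_v = 1 μ-a.e. for every g ∈ G. -/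
/-!
For a phase polynomial `φ` of degree `< k + 1`, closeness to `1` in `L¹(μ)` forces invariance:
`‖Δ_g φ - 1‖₁ ≤ 2 ‖φ - 1‖₁`, so by induction and ergodicity `Δ_g φ` is a.e. a constant `c`,
and `∫ φ ∘ T_g = c ∫ φ` with `∫ φ ≠ 0` gives `c = 1`.

The cocycle identity gives `‖f_{uv} - f_u‖₁ = ‖f_v - 1‖₁`. Approximating `f` in `L¹(U × X)` by
functions that are constant in `u` on the cells of a finite measurable partition of `U` yields a
set `A` of positive Haar measure on which the sections `f_u` are pairwise `2^{1-d}`-close, so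
`f_v` is invariant for every `v ∈ A / A`. The invariant `v` form a subgroup, which contains the
neighbourhood `A / A` of `1` (Steinhaus) and is therefore open.
-/

open MeasureTheory
open scoped symmDiff

open scoped ENNReal Pointwise

theorem MeasureTheory.MeasurePreserving.ae_of_ae_comp {X Y : Type*} [MeasurableSpace X]
    [MeasurableSpace Y] {μ : Measure X} {ν : Measure Y} {S : X → Y}
    (hS : MeasurePreserving S μ ν) {p : Y → Prop} (hp : MeasurableSet {y | p y})
    (h : ∀ᵐ x ∂μ, p (S x)) : ∀ᵐ y ∂ν, p y := by
  rw [← hS.map_eq]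
  exact (ae_map_iff hS.aemeasurable hp).2 h

theorem measure_setOf_lt_pos_of_lintegral_lt {α : Type*} [MeasurableSpace α] {lam : Measure α}
    [IsProbabilityMeasure lam] {r : α → ℝ≥0∞} {c : ℝ≥0∞} (h : ∫⁻ a, r a ∂lam < c) :
    0 < lam {a | r a < c} := by
  refine pos_iff_ne_zero.2 fun h0 => h.not_ge ?_
  have hae : ∀ᵐ a ∂lam, c ≤ r a := ae_iff.2 (by simpa only [not_le] using h0)
  calc c = ∫⁻ _, c ∂lam := by simp
    _ ≤ ∫⁻ a, r a ∂lam := lintegral_mono_ae hae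

theorem integral_ne_zero_of_lintegral_edist_lt {X E : Type*} [MeasurableSpace X]
    {μ : Measure X} [IsProbabilityMeasure μ] [NormedAddCommGroup E] [NormedSpace ℝ E]
    [CompleteSpace E] {Φ : X → E} (hΦ : Integrable Φ μ) {e : E}
    (hΦe : ∫⁻ x, edist (Φ x) e ∂μ < ‖e‖ₑ) : ∫ x, Φ x ∂μ ≠ 0 := by
  intro h0
  have hle : ‖∫ x, (Φ x - e) ∂μ‖ₑ ≤ ∫⁻ x, ‖Φ x - e‖ₑ ∂μ := enorm_integral_le_lintegral_enorm _
  rw [integral_sub hΦ (integrable_const e), h0, integral_const, probReal_univ, one_smul,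
    zero_sub, enorm_neg] at hle
  simp only [edist_eq_enorm_sub] at hΦe
  exact (hle.trans_lt hΦe).false

theorem IsErgodicAction.exists_ae_eq_const {G X Y : Type*} [MeasurableSpace X] {μ : Measure X}
    [IsProbabilityMeasure μ] {T : G → X → X} (herg : IsErgodicAction T μ)
    [MeasurableSpace Y] [Nonempty Y] [MeasurableSpace.CountablySeparated Y]
    {ψ : X → Y} (hψ : Measurable ψ) (hinv : ∀ g, ∀ᵐ x ∂μ, ψ (T g x) = ψ x) :
    ∃ c, ∀ᵐ x ∂μ, ψ x = c := by
  refine Filter.exists_eventuallyEq_const_of_forall_separating MeasurableSet fun A hA => ?_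
  have hAm : MeasurableSet (ψ ⁻¹' A) := hψ hA
  have hAinv : ∀ g, μ ((T g ⁻¹' (ψ ⁻¹' A)) ∆ (ψ ⁻¹' A)) = 0 := fun g =>
    measure_symmDiff_eq_zero_iff.2 <| (hinv g).mono fun x hx => congrArg (· ∈ A) hx
  rcases herg _ hAm hAinv with h | h
  · exact Or.inr (measure_eq_zero_iff_ae_notMem.1 h)
  · exact Or.inl (mem_ae_iff.2 ((prob_compl_eq_zero_iff hAm).2 h))

theorem Complex.edist_le_edist_re_add_edist_im (z w : ℂ) :
    edist z w ≤ edist z.re w.re + edist z.im w.im := by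
  calc edist z w ≤ edist z ⟨w.re, z.im⟩ + edist (⟨w.re, z.im⟩ : ℂ) w := edist_triangle _ _ _
    _ = edist z.re w.re + edist z.im w.im := by
      rw [Complex.edist_of_im_eq (z := z) (w := ⟨w.re, z.im⟩) rfl,
        Complex.edist_of_re_eq (z := ⟨w.re, z.im⟩) (w := w) rfl]

theorem MeasureTheory.Measure.isProbabilityMeasure_haarMeasure_top {U : Type*} [Group U]
    [TopologicalSpace U] [IsTopologicalGroup U] [CompactSpace U] [MeasurableSpace U]
    [BorelSpace U] :
    IsProbabilityMeasure (haarMeasure (⊤ : TopologicalSpace.PositiveCompacts U)) :=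
  ⟨by simpa using haarMeasure_self (K₀ := (⊤ : TopologicalSpace.PositiveCompacts U))⟩

theorem Circle.measurable_coe : Measurable (fun z : Circle => (z : ℂ)) :=
  Continuous.measurable (α := Circle) continuous_subtype_val

theorem Circle.edist_mul_inv_one (a b : Circle) : edist (a * b⁻¹) 1 = edist a b := by
  have hb : ‖(b : ℂ)‖ₑ = 1 := by rw [← ofReal_norm, Circle.norm_coe, ENNReal.ofReal_one]
  rw [edist_comm]
  change edist ((1 : Circle) : ℂ) ((a * b⁻¹ : Circle) : ℂ) = edist (a : ℂ) (b : ℂ)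
  rw [Circle.coe_mul, Circle.coe_inv, Circle.coe_one, edist_eq_enorm_sub, edist_comm,
    edist_eq_enorm_sub, show 1 - (a : ℂ) * (b : ℂ)⁻¹ = ((b : ℂ) - a) * (b : ℂ)⁻¹ by
      field_simp [Circle.coe_ne_zero b],
    enorm_mul, enorm_inv (Circle.coe_ne_zero b), hb, inv_one, mul_one]

theorem Circle.edist_mul_left (a b c : Circle) : edist (a * b) (a * c) = edist b c := by
  rw [← Circle.edist_mul_inv_one, ← Circle.edist_mul_inv_one b, ← div_eq_mul_inv,
    ← div_eq_mul_inv, mul_div_mul_left_eq_div]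

theorem phasePoly_one_iff {G X H : Type*} [MeasurableSpace X] [CommGroup H] {T : G → X → X}
    {μ : Measure X} {φ : X → H} :
    PhasePoly T μ 1 φ ↔ ∀ g, ∀ᵐ x ∂μ, φ (T g x) = φ x :=
  forall_congr' fun _ => by simp only [PhasePoly, mul_inv_eq_one]

section PhasePolynomial

variable {G X : Type*} [MeasurableSpace X] {μ : Measure X}

theorem MeasureTheory.MeasurePreserving.eq_one_of_ae_comp_eq_mul [IsProbabilityMeasure μ]
    {S : X → X} (hS : MeasurePreserving S μ μ) {φ : X → Circle} (hφ : Measurable φ)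
    (hφ1 : ∫⁻ x, edist (φ x) 1 ∂μ < 1) {c : Circle} (hc : ∀ᵐ x ∂μ, φ (S x) = c * φ x) :
    c = 1 := by
  set Φ : X → ℂ := fun x => φ x
  have hΦm : Measurable Φ := Circle.measurable_coe.comp hφ
  have hΦi : Integrable Φ μ :=
    Integrable.of_bound hΦm.aestronglyMeasurable 1 (ae_of_all _ fun x => (Circle.norm_coe _).le)
  have hcomp : ∫ x, Φ (S x) ∂μ = ∫ x, Φ x ∂μ := by
    rw [← integral_map hS.aemeasurable hΦm.aestronglyMeasurable, hS.map_eq]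
  have hmul : ∫ x, Φ (S x) ∂μ = c * ∫ x, Φ x ∂μ := by
    rw [← integral_const_mul]
    exact integral_congr_ae (hc.mono fun x hx => by simp [Φ, hx])
  have hne : ∫ x, Φ x ∂μ ≠ 0 :=
    integral_ne_zero_of_lintegral_edist_lt hΦi (e := 1) (by rw [enorm_one]; exact hφ1)
  rw [hcomp] at hmul
  exact Circle.coe_eq_one.1 (mul_left_eq_self₀.1 hmul.symm |>.resolve_right hne)

theorem lintegral_edist_mul_inv_comp_le {S : X → X} (hS : MeasurePreserving S μ μ)
    {φ : X → Circle} (hφ : Measurable φ) :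
    ∫⁻ x, edist (φ (S x) * (φ x)⁻¹) 1 ∂μ ≤ 2 * ∫⁻ x, edist (φ x) 1 ∂μ := by
  have hd : Measurable fun x => edist (φ x) 1 := hφ.edist measurable_const
  calc ∫⁻ x, edist (φ (S x) * (φ x)⁻¹) 1 ∂μ
      ≤ ∫⁻ x, (edist (φ (S x)) 1 + edist (φ x) 1) ∂μ :=
        lintegral_mono fun x => by
          rw [Circle.edist_mul_inv_one]; exact edist_triangle_right _ _ _
    _ = 2 * ∫⁻ x, edist (φ x) 1 ∂μ := by
        rw [lintegral_add_left (f := fun x => edist (φ (S x)) 1) (hd.comp hS.measurable),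
          hS.lintegral_comp hd, two_mul]

theorem phasePoly_one_of_lintegral_edist_lt [IsProbabilityMeasure μ] {T : G → X → X}
    (hT : ∀ g, MeasurePreserving (T g) μ μ) (herg : IsErgodicAction T μ) (k : ℕ)
    {φ : X → Circle} (hφ : Measurable φ) (hpoly : PhasePoly T μ (k + 1) φ)
    (hsmall : ∫⁻ x, edist (φ x) 1 ∂μ < 2⁻¹ ^ k) : PhasePoly T μ 1 φ := by
  induction k generalizing φ with
  | zero => exact hpoly
  | succ k ih =>
    intro g
    set ψ : X → Circle := fun x => φ (T g x) * (φ x)⁻¹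
    have hψm : Measurable ψ := (hφ.comp (hT g).measurable).mul hφ.inv
    have hψsmall : ∫⁻ x, edist (ψ x) 1 ∂μ < 2⁻¹ ^ k :=
      calc ∫⁻ x, edist (ψ x) 1 ∂μ ≤ 2 * ∫⁻ x, edist (φ x) 1 ∂μ :=
            lintegral_edist_mul_inv_comp_le (hT g) hφ
        _ < 2 * 2⁻¹ ^ (k + 1) := by gcongr; exact ENNReal.ofNat_ne_top
        _ = 2⁻¹ ^ k := by
          rw [pow_succ, mul_comm, mul_assoc,
            ENNReal.inv_mul_cancel two_ne_zero ENNReal.ofNat_ne_top, mul_one]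
    obtain ⟨c, hc⟩ := herg.exists_ae_eq_const hψm
      (phasePoly_one_iff.1 (ih hψm (hpoly g) hψsmall))
    have hc1 : c = 1 := (hT g).eq_one_of_ae_comp_eq_mul hφ
      (hsmall.trans_le (pow_le_one₀ (by norm_num) (ENNReal.inv_le_one.2 one_le_two)))
      (hc.mono fun x hx => by rw [← hx, inv_mul_cancel_right])
    show ∀ᵐ x ∂μ, ψ x = 1
    exact hc.mono fun x hx => hx.trans hc1

end PhasePolynomial

section CountablePartition

open MeasurableSpace ProbabilityTheory

variable {U X : Type*} [mU : MeasurableSpace U] [mX : MeasurableSpace X]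

def MeasureTheory.Filtration.prod {ι : Type*} [Preorder ι] (ℱ : Filtration ι mU)
    (mX : MeasurableSpace X) : Filtration ι (mU.prod mX) where
  seq i := (ℱ i).prod mX
  mono' _ _ hij := sup_le_sup_right (comap_mono (ℱ.mono hij)) _
  le' i := sup_le_sup_right (comap_mono (ℱ.le i)) _

theorem MeasureTheory.Filtration.iSup_prod {ι : Type*} [Preorder ι] [Nonempty ι]
    (ℱ : Filtration ι mU) : ⨆ i, ℱ.prod mX i = (⨆ i, ℱ i).prod mX := by
  refine le_antisymm (iSup_le fun i => sup_le_sup_right (comap_mono (le_iSup _ i)) _) ?_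
  refine sup_le ?_ ?_
  · rw [comap_iSup]
    exact iSup_mono fun i => le_sup_left
  · exact (le_sup_right : _ ≤ ℱ.prod mX (Classical.arbitrary ι)).trans
      (le_iSup (fun i => ℱ.prod mX i) _)

variable [CountablyGenerated U]

theorem mem_iff_mem_of_countablePartitionSet_eq {n : ℕ} {u u' : U}
    (h : countablePartitionSet n u = countablePartitionSet n u') {A : Set U}
    (hA : MeasurableSet[countableFiltration U n] A) : u ∈ A ↔ u' ∈ A := by
  obtain ⟨S, hS, rfl⟩ := (measurableSet_generateFrom_countablePartition_iff n A).1 hA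
  have key : ∀ v : U, v ∈ ⋃₀ (S : Set (Set U)) ↔ countablePartitionSet n v ∈ S := fun v => by
    refine ⟨fun ⟨s, hs, hv⟩ => ?_, fun hv => ⟨_, hv, mem_countablePartitionSet n v⟩⟩
    rwa [(countablePartitionSet_eq_iff v (hS hs)).2 hv]
  rw [key, key, h]

theorem apply_eq_of_countablePartitionSet_eq {β : Type*} [MeasurableSpace β]
    [MeasurableSingletonClass β] {n : ℕ} {G : U × X → β}
    (hG : Measurable[(countableFiltration U).prod mX n] G) {u u' : U}
    (h : countablePartitionSet n u = countablePartitionSet n u') (x : X) :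
    G (u, x) = G (u', x) :=
  (mem_iff_mem_of_countablePartitionSet_eq h
    ((hG.comp (@measurable_prodMk_right _ _ (countableFiltration U n) mX x))
      (measurableSet_singleton (G (u', x))))).2 rfl

theorem exists_measurable_countableFiltration_lintegral_edist_lt (lam : Measure U)
    [IsFiniteMeasure lam] (μ : Measure X) [IsFiniteMeasure μ] {F : U × X → ℂ}
    (hFm : Measurable F) (hFi : Integrable F (lam.prod μ)) {ε : ℝ≥0∞} (hε : 0 < ε) :
    ∃ n, ∃ G : U × X → ℂ, Measurable[(countableFiltration U).prod mX n] G ∧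
      ∫⁻ p, edist (F p) (G p) ∂(lam.prod μ) < ε := by
  set ℱ := (countableFiltration U).prod mX
  set ν := lam.prod μ
  have hsup : ⨆ n, ℱ n = mU.prod mX := by
    rw [Filtration.iSup_prod, iSup_countableFiltration]
  -- Lévy's upward theorem
  have hconv : ∀ g : U × X → ℝ, Measurable g → Integrable g ν →
      ∀ᶠ n in Filter.atTop, eLpNorm (ν[g|ℱ n] - g) 1 ν < ε / 2 := fun g hgm hgi =>
    (hgi.tendsto_eLpNorm_condExp (hsup ▸ hgm.stronglyMeasurable)).eventually_lt_const
      (ENNReal.half_pos hε.ne')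
  have hFre : Measurable fun p => (F p).re := Complex.measurable_re.comp hFm
  have hFim : Measurable fun p => (F p).im := Complex.measurable_im.comp hFm
  obtain ⟨n, hre, him⟩ := ((hconv _ hFre hFi.re).and (hconv _ hFim hFi.im)).exists
  set gre := ν[fun p => (F p).re|ℱ n]
  set gim := ν[fun p => (F p).im|ℱ n]
  refine ⟨n, fun p => ⟨gre p, gim p⟩, ?_, ?_⟩
  · exact Complex.measurableEquivRealProd.symm.measurable.comp
      (stronglyMeasurable_condExp.measurable.prodMk stronglyMeasurable_condExp.measurable)
  have hgre : Measurable gre := (stronglyMeasurable_condExp.mono (ℱ.le n)).measurable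
  calc ∫⁻ p, edist (F p) ⟨gre p, gim p⟩ ∂ν
      ≤ ∫⁻ p, (edist (gre p) (F p).re + edist (gim p) (F p).im) ∂ν :=
        lintegral_mono fun p => by
          rw [edist_comm (gre p), edist_comm (gim p)]
          exact Complex.edist_le_edist_re_add_edist_im _ _
    _ = eLpNorm (gre - fun p => (F p).re) 1 ν + eLpNorm (gim - fun p => (F p).im) 1 ν := by
        rw [lintegral_add_left (f := fun p => edist (gre p) (F p).re) (hgre.edist hFre),
          eLpNorm_one_eq_lintegral_enorm, eLpNorm_one_eq_lintegral_enorm]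
        simp only [edist_eq_enorm_sub, Pi.sub_apply]
    _ < ε / 2 + ε / 2 := ENNReal.add_lt_add hre him
    _ = ε := ENNReal.add_halves ε

theorem exists_measure_pos_forall_lintegral_edist_lt (lam : Measure U)
    [IsProbabilityMeasure lam] (μ : Measure X) [IsFiniteMeasure μ] {F : U × X → ℂ}
    (hFm : Measurable F) (hFi : Integrable F (lam.prod μ)) {δ : ℝ≥0∞} (hδ : 0 < δ) :
    ∃ A : Set U, MeasurableSet A ∧ 0 < lam A ∧
      ∀ u ∈ A, ∀ u' ∈ A, ∫⁻ x, edist (F (u, x)) (F (u', x)) ∂μ < δ := by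
  obtain ⟨n, G, hGn, hFG⟩ := exists_measurable_countableFiltration_lintegral_edist_lt lam μ hFm
    hFi (ENNReal.half_pos hδ.ne')
  have hG : Measurable G := hGn.mono (((countableFiltration U).prod mX).le n) le_rfl
  set r : U → ℝ≥0∞ := fun u => ∫⁻ x, edist (F (u, x)) (G (u, x)) ∂μ
  have hr : Measurable r := (hFm.edist hG).lintegral_prod_right'
  set Om := {u | r u < δ / 2}
  have hOm : 0 < lam Om := measure_setOf_lt_pos_of_lintegral_lt <| by
    rwa [← lintegral_prod _ (hFm.edist hG).aemeasurable]
  obtain ⟨⟨s, hs⟩, hsOm⟩ : ∃ s : countablePartition U n, 0 < lam (s ∩ Om) := by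
    refine exists_measure_pos_of_not_measure_iUnion_null ?_
    rwa [← Set.iUnion_inter, ← Set.sUnion_eq_iUnion, sUnion_countablePartition, Set.univ_inter,
      ← pos_iff_ne_zero]
  refine ⟨s ∩ Om, (measurableSet_countablePartition n hs).inter (hr measurableSet_Iio), hsOm, ?_⟩
  rintro u ⟨hus, hu⟩ u' ⟨hu's, hu'⟩
  have hsame : countablePartitionSet n u = countablePartitionSet n u' := by
    rw [(countablePartitionSet_eq_iff u hs).2 hus, (countablePartitionSet_eq_iff u' hs).2 hu's]
  calc ∫⁻ x, edist (F (u, x)) (F (u', x)) ∂μ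
      ≤ ∫⁻ x, (edist (F (u, x)) (G (u, x)) + edist (F (u', x)) (G (u', x))) ∂μ :=
        lintegral_mono fun x => by
          rw [apply_eq_of_countablePartitionSet_eq hGn hsame x]
          exact edist_triangle_right _ _ _
    _ = r u + r u' :=
        lintegral_add_left ((hFm.edist hG).comp measurable_prodMk_left) _
    _ < δ / 2 + δ / 2 := ENNReal.add_lt_add hu hu'
    _ = δ := ENNReal.add_halves δ

end CountablePartition

section Cocycle

variable {G X U : Type*} [MeasurableSpace X] {μ : Measure X} [CommGroup U]
  {T : G → X → X} {V : U → X → X} {f : U → X → Circle}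

theorem cocycle_one_ae_eq_one (hV : MeasurePreserving (V 1) μ μ) (hf : Measurable (f 1))
    (hfcoc : ∀ᵐ x ∂μ, f (1 * 1) x = f 1 x * f 1 (V 1 x)) : ∀ᵐ x ∂μ, f 1 x = 1 :=
  hV.ae_of_ae_comp (hf (measurableSet_singleton 1)) <| hfcoc.mono fun x hx => by
    rw [one_mul] at hx
    exact mul_eq_left.1 hx.symm

theorem lintegral_edist_cocycle (hV : ∀ u, MeasurePreserving (V u) μ μ)
    (hfm : ∀ u, Measurable (f u)) (hfcoc : ∀ u v, ∀ᵐ x ∂μ, f (u * v) x = f u x * f v (V u x))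
    (u v : U) : ∫⁻ x, edist (f (u * v) x) (f u x) ∂μ = ∫⁻ x, edist (f v x) 1 ∂μ := by
  rw [← (hV u).lintegral_comp ((hfm v).edist measurable_const)]
  exact lintegral_congr_ae <| (hfcoc u v).mono fun x hx => by
    simpa [hx] using Circle.edist_mul_left (f u x) (f v (V u x)) 1

theorem phasePoly_one_cocycle_one (hT : ∀ g, MeasurePreserving (T g) μ μ)
    (hV : ∀ u, MeasurePreserving (V u) μ μ) (hfm : ∀ u, Measurable (f u))
    (hfcoc : ∀ u v, ∀ᵐ x ∂μ, f (u * v) x = f u x * f v (V u x)) : PhasePoly T μ 1 (f 1) := by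
  have h1 := cocycle_one_ae_eq_one (hV 1) (hfm 1) (hfcoc 1 1)
  refine phasePoly_one_iff.2 fun g => ?_
  filter_upwards [h1, (hT g).quasiMeasurePreserving.ae h1] with x hx hTx
  rw [hx, hTx]

theorem phasePoly_one_cocycle_mul (hT : ∀ g, MeasurePreserving (T g) μ μ)
    (hV : ∀ u, MeasurePreserving (V u) μ μ)
    (hVcomm : ∀ u g, ∀ᵐ x ∂μ, V u (T g x) = T g (V u x))
    (hfcoc : ∀ u v, ∀ᵐ x ∂μ, f (u * v) x = f u x * f v (V u x)) {u v : U}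
    (hu : PhasePoly T μ 1 (f u)) (hv : PhasePoly T μ 1 (f v)) : PhasePoly T μ 1 (f (u * v)) := by
  rw [phasePoly_one_iff] at hu hv ⊢
  intro g
  filter_upwards [hfcoc u v, (hT g).quasiMeasurePreserving.ae (hfcoc u v), hVcomm u g,
    (hV u).quasiMeasurePreserving.ae (hv g), hu g] with x hx hTx hcomm hvx hux
  rw [hTx, hcomm, hvx, hux, hx]

theorem phasePoly_one_cocycle_inv (hT : ∀ g, MeasurePreserving (T g) μ μ)
    (hV : ∀ u, MeasurePreserving (V u) μ μ)
    (hVcomm : ∀ u g, ∀ᵐ x ∂μ, V u (T g x) = T g (V u x))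
    (hfm : ∀ u, Measurable (f u)) (hfcoc : ∀ u v, ∀ᵐ x ∂μ, f (u * v) x = f u x * f v (V u x))
    {u : U} (hu : PhasePoly T μ 1 (f u)) : PhasePoly T μ 1 (f u⁻¹) := by
  rw [phasePoly_one_iff] at hu ⊢
  intro g
  have hinv : ∀ᵐ x ∂μ, f u⁻¹ (V u x) = (f u x)⁻¹ := by
    filter_upwards [hfcoc u u⁻¹, cocycle_one_ae_eq_one (hV 1) (hfm 1) (hfcoc 1 1)] with x hx h1
    rw [mul_inv_cancel, h1] at hx
    exact eq_inv_of_mul_eq_one_right hx.symm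
  refine (hV u).ae_of_ae_comp (measurableSet_eq_fun ((hfm _).comp (hT g).measurable) (hfm _)) ?_
  filter_upwards [hinv, (hT g).quasiMeasurePreserving.ae hinv, hVcomm u g, hu g]
    with x hx hTx hcomm hux
  rw [← hcomm, hTx, hux, hx]

end Cocycle

theorem phase_polynomial_cocycle_in_u_trivial_on_open_subgroup_general
    {G : Type*} [AddCommGroup G]
    {X : Type*} [MeasurableSpace X] (μ : Measure X) [IsProbabilityMeasure μ]
    {U : Type*} [CommGroup U] [TopologicalSpace U] [IsTopologicalGroup U]
    [CompactSpace U] [TopologicalSpace.MetrizableSpace U]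
    [MeasurableSpace U] [BorelSpace U]
    (T : G → X → X)
    (hT : ∀ g, MeasurePreserving (T g) μ μ)
    (herg : IsErgodicAction T μ)
    (V : U → X → X)
    (hV : ∀ u, MeasurePreserving (V u) μ μ)
    (hVcomm : ∀ u g, ∀ᵐ x ∂μ, V u (T g x) = T g (V u x))
    (d : ℕ) (hd : 1 ≤ d)
    (f : U → X → Circle)
    (hfjoint : Measurable (fun p : U × X => f p.1 p.2))
    (hfpoly : ∀ u, PhasePoly T μ d (f u))
    (hfcoc : ∀ u v, ∀ᵐ x ∂μ, f (u * v) x = f u x * f v (V u x)) :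
    ∃ W : Subgroup U, IsOpen (W : Set U) ∧
      ∀ v ∈ W, PhasePoly T μ 1 (f v) := by
  have hfm : ∀ u, Measurable (f u) := fun u => hfjoint.comp measurable_prodMk_left
  let W : Subgroup U :=
    { carrier := {v | PhasePoly T μ 1 (f v)}
      one_mem' := phasePoly_one_cocycle_one hT hV hfm hfcoc
      mul_mem' := phasePoly_one_cocycle_mul hT hV hVcomm hfcoc
      inv_mem' := phasePoly_one_cocycle_inv hT hV hVcomm hfm hfcoc }
  refine ⟨W, ?_, fun v hv => hv⟩
  let lam := Measure.haarMeasure (⊤ : TopologicalSpace.PositiveCompacts U)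
  have := Measure.isProbabilityMeasure_haarMeasure_top (U := U)
  have hF : Measurable fun p : U × X => (f p.1 p.2 : ℂ) := Circle.measurable_coe.comp hfjoint
  obtain ⟨A, hAm, hApos, hA⟩ := exists_measure_pos_forall_lintegral_edist_lt lam μ hF
    (Integrable.of_bound hF.aestronglyMeasurable 1 (ae_of_all _ fun p => (Circle.norm_coe _).le))
    (ENNReal.pow_pos (ENNReal.inv_pos.2 ENNReal.ofNat_ne_top) _ : 0 < (2⁻¹ : ℝ≥0∞) ^ (d - 1))
  have hAW : A / A ⊆ (W : Set U) := by
    rintro _ ⟨a, ha, b, hb, rfl⟩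
    refine phasePoly_one_of_lintegral_edist_lt hT herg (d - 1) (hfm _)
      (by rw [Nat.sub_add_cancel hd]; exact hfpoly _) ?_
    rw [← lintegral_edist_cocycle hV hfm hfcoc b, mul_div_cancel]
    exact hA a ha b hb
  exact Subgroup.isOpen_of_mem_nhds W
    (Filter.mem_of_superset (Measure.div_mem_nhds_one_of_haar_pos lam A hAm hApos) hAW)

/-- Let `G` be a countable discrete abelian group, `X` an ergodic
`G`-system, and `U` a compact metrizable abelian group acting on `X` by measure-preserving
transformations `V_u` commuting with the `G`-action, jointly measurably.  Let `d ≥ 1` and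
let `f : U × X → S¹` be jointly measurable such that each `f_u` is a phase polynomial of
degree `< d` and `f_{uv}(x) = f_u(x) · f_v(V_u x)`.  Then there is an open subgroup `W` of
`U` such that `f_v` is a phase polynomial of degree `< 1` for every `v ∈ W`. -/
theorem phase_polynomial_cocycle_in_u_trivial_on_open_subgroup
    {G : Type*} [AddCommGroup G] [Countable G]
    {X : Type*} [MeasurableSpace X] (μ : Measure X) [IsProbabilityMeasure μ]
    {U : Type*} [CommGroup U] [TopologicalSpace U] [IsTopologicalGroup U]
    [CompactSpace U] [TopologicalSpace.MetrizableSpace U]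
    [MeasurableSpace U] [BorelSpace U]
    (T : G → X → X)
    (hT : ∀ g, MeasurePreserving (T g) μ μ)
    (hT0 : T 0 = id) (hTadd : ∀ g g', T (g + g') = T g ∘ T g')
    (herg : IsErgodicAction T μ)
    (V : U → X → X)
    (hV : ∀ u, MeasurePreserving (V u) μ μ)
    (hVjoint : Measurable (fun p : U × X => V p.1 p.2))
    (hV1 : ∀ᵐ x ∂μ, V 1 x = x)
    (hVmul : ∀ u v, ∀ᵐ x ∂μ, V (u * v) x = V u (V v x))
    (hVcomm : ∀ u g, ∀ᵐ x ∂μ, V u (T g x) = T g (V u x))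
    (d : ℕ) (hd : 1 ≤ d)
    (f : U → X → Circle)
    (hfjoint : Measurable (fun p : U × X => f p.1 p.2))
    (hfpoly : ∀ u, PhasePoly T μ d (f u))
    (hfcoc : ∀ u v, ∀ᵐ x ∂μ, f (u * v) x = f u x * f v (V u x)) :
    ∃ W : Subgroup U, IsOpen (W : Set U) ∧
      ∀ v ∈ W, PhasePoly T μ 1 (f v) :=
  phase_polynomial_cocycle_in_u_trivial_on_open_subgroup_general μ T hT herg V hV hVcomm d hd f
    hfjoint hfpoly hfcoc
end

section
/- For every prime p and integers d, m, n ≥ 1 there exists a constant C = C(p, d, m, n) with the following property. Let I be a countable index set, let (q_i)_{i∈I} be a family of primes, let G = ⨁_{i∈I} ℤ/q_iℤ, let X be an ergodic G-system, and let φ₁, …, φ_m : X → S¹ be phase polynomials of degree < d satisfying φ_i(x)^{p^d} = 1 for μ-a.e. x (i = 1, …, m). Then for every function F : (μ_{p^d})^m → μ_{p^n}, where μ_N denotes the group of N-th roots of unity in S¹, the composite x ↦ F(φ₁(x), …, φ_m(x)) is a phase polynomial of degree < C. -/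
open MeasureTheory
open scoped symmDiff

/-! Taking discrete logarithms makes everything additive: the `φᵢ` lift to a map
`b : X → (ZMod (p ^ d))ᵐ` all of whose `d`-fold differences vanish a.e., and the composite is
`f ∘ b` for some `f : (ZMod (p ^ d))ᵐ → ZMod (p ^ n)`. Every such `f` is a polynomial map of a
degree `R` depending only on `p, d, m, n`: for the translation `τ` of `ZMod (p ^ s)` one has
`(τ - 1) ^ p ^ s ∈ p ℤ[τ]`, hence `(τ - 1) ^ (p ^ s * n) = 0` on `ZMod (p ^ n)`-valued functions.
Then `f ∘ b` is polynomial by induction on the degree of `b`, using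
`Δ_g (f ∘ b) = ∑ᵥ 1[Δ_g b = v] · (Δᵥ f) ∘ b`: the first factor is a function of the
lower-degree map `Δ_g b`, the second involves the lower-degree polynomial map `Δᵥ f`. -/

open Filter

/-- The additive analogue of `PhasePoly`, along a filter: `l = ae μ` gives the almost-everywhere
notion, `l = ⊤` the pointwise one. -/
def AddPoly {G X W : Type*} [AddCommGroup W] (T : G → X → X) (l : Filter X) :
    ℕ → (X → W) → Prop
  | 0, c => ∀ᶠ x in l, c x = 0
  | k + 1, c => ∀ g : G, AddPoly T l k (fun x => c (T g x) - c x)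

namespace AddPoly

variable {G X : Type*} {T : G → X → X} {l : Filter X}

section AddCommGroup

variable {W : Type*} [AddCommGroup W]

theorem zero (k : ℕ) : AddPoly T l k (fun _ => (0 : W)) := by
  induction k with
  | zero => exact Eventually.of_forall fun _ => rfl
  | succ k ih => intro g; simpa only [sub_self] using ih

theorem const (w : W) : AddPoly T l 1 (fun _ => w) :=
  fun _ => Eventually.of_forall fun _ => sub_self w

theorem congr (hT : ∀ g, Tendsto (T g) l l) {k : ℕ} {c c' : X → W} (h : c =ᶠ[l] c')
    (hc : AddPoly T l k c) : AddPoly T l k c' := by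
  induction k generalizing c c' with
  | zero => filter_upwards [hc, h] with x h₀ hx using hx ▸ h₀
  | succ k ih => exact fun g => ih ((h.comp_tendsto (hT g)).sub h) (hc g)

theorem mono (hT : ∀ g, Tendsto (T g) l l) {k : ℕ} {c : X → W} (hc : AddPoly T l k c) :
    AddPoly T l (k + 1) c := by
  induction k generalizing c with
  | zero =>
    intro g
    filter_upwards [hc, hT g hc] with x h₀ h₁
    rw [h₀, h₁, sub_zero]
  | succ k ih => exact fun g => ih (hc g)

theorem of_le (hT : ∀ g, Tendsto (T g) l l) {k k' : ℕ} (hk : k ≤ k') {c : X → W}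
    (hc : AddPoly T l k c) : AddPoly T l k' c := by
  induction hk with
  | refl => exact hc
  | step _ ih => exact ih.mono hT

theorem add {k : ℕ} {c c' : X → W} (hc : AddPoly T l k c) (hc' : AddPoly T l k c') :
    AddPoly T l k (fun x => c x + c' x) := by
  induction k generalizing c c' with
  | zero => filter_upwards [hc, hc'] with x h h' using by rw [h, h', add_zero]
  | succ k ih => intro g; simpa only [add_sub_add_comm] using ih (hc g) (hc' g)

theorem sum {ι : Type*} (s : Finset ι) {k : ℕ} {c : ι → X → W}
    (hc : ∀ i ∈ s, AddPoly T l k (c i)) : AddPoly T l k (fun x => ∑ i ∈ s, c i x) := by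
  classical
  induction s using Finset.induction_on with
  | empty => simpa only [Finset.sum_empty] using zero k
  | insert i s hi ih =>
    simp only [Finset.sum_insert hi]
    exact (hc i (s.mem_insert_self i)).add (ih fun j hj => hc j (Finset.mem_insert_of_mem hj))

theorem comp_act (hT : ∀ g, Tendsto (T g) l l) (hcomm : ∀ g h x, T g (T h x) = T h (T g x))
    (g : G) {k : ℕ} {c : X → W} (hc : AddPoly T l k c) :
    AddPoly T l k (fun x => c (T g x)) := by
  induction k generalizing c with
  | zero => exact hT g hc
  | succ k ih => intro h; simpa only [hcomm h g] using ih (hc h)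

theorem pi {ι : Type*} [Finite ι] {V : Type*} [AddCommGroup V] {k : ℕ} {b : X → ι → V}
    (hb : ∀ i, AddPoly T l k (fun x => b x i)) : AddPoly T l k b := by
  induction k generalizing b with
  | zero => filter_upwards [eventually_all.2 hb] with x hx using funext hx
  | succ k ih => exact fun g => ih fun i => hb i g

theorem map_iff {W' : Type*} [AddCommGroup W'] (ψ : W →+ W') (hψ : Function.Injective ψ)
    {k : ℕ} {c : X → W} : AddPoly T l k (fun x => ψ (c x)) ↔ AddPoly T l k c := by
  induction k generalizing c with
  | zero => exact eventually_congr (Eventually.of_forall fun x => map_eq_zero_iff ψ hψ)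
  | succ k ih => exact forall_congr' fun g => by simp only [← map_sub]; exact ih

end AddCommGroup

theorem mul {R : Type*} [NonUnitalNonAssocRing R]
    (hT : ∀ g, Tendsto (T g) l l) (hcomm : ∀ g h x, T g (T h x) = T h (T g x)) :
    ∀ {j k : ℕ} {c c' : X → R}, AddPoly T l j c → AddPoly T l k c' →
      AddPoly T l (j + k) (fun x => c x * c' x)
  | 0, k, c, c', hc, _ => by
    refine of_le hT (Nat.zero_le _) ?_
    filter_upwards [hc] with x h using by rw [h, zero_mul]
  | j + 1, 0, c, c', _, hc' => by
    refine of_le hT (Nat.zero_le _) ?_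
    filter_upwards [hc'] with x h using by rw [h, mul_zero]
  | j + 1, k + 1, c, c', hc, hc' => by
    refine fun g => show AddPoly T l (j + 1 + k) _ from ?_
    have h₁ := mul hT hcomm (hc.comp_act hT hcomm g) (hc' g)
    have h₂ := (mul hT hcomm (hc g) hc').of_le hT (by omega : j + (k + 1) ≤ j + 1 + k)
    -- Leibniz rule: `Δ(c c') = (c ∘ T g) Δc' + (Δc) c'`
    convert h₁.add h₂ using 2 with x
    simp only [mul_sub, sub_mul]
    abel

end AddPoly

abbrev IsPolyMap {A W : Type*} [Add A] [AddCommGroup W] (k : ℕ) (F : A → W) : Prop :=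
  AddPoly (fun v a : A => a + v) ⊤ k F

namespace IsPolyMap

variable {A W : Type*} [AddCommGroup A] [AddCommGroup W]

theorem of_le {k k' : ℕ} (hk : k ≤ k') {F : A → W} (hF : IsPolyMap k F) : IsPolyMap k' F :=
  AddPoly.of_le (fun _ => tendsto_top) hk hF

theorem comp_addMonoidHom {B : Type*} [AddCommGroup B] (π : B →+ A) {k : ℕ} {F : A → W}
    (hF : IsPolyMap k F) : IsPolyMap k (fun b => F (π b)) := by
  induction k generalizing F with
  | zero => exact eventually_top.2 fun b => eventually_top.1 hF (π b)
  | succ k ih => intro v; simpa only [map_add] using ih (hF (π v))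

theorem mul {R : Type*} [NonUnitalNonAssocRing R] {j k : ℕ} {F F' : A → R}
    (hF : IsPolyMap j F) (hF' : IsPolyMap k F') : IsPolyMap (j + k) (fun a => F a * F' a) :=
  AddPoly.mul (fun _ => tendsto_top) (fun v w a => add_right_comm a w v) hF hF'

end IsPolyMap

theorem pow_mul_eq_zero_of_add_one_pow_eq_one {R : Type*} [Ring R] {p : ℕ} (hp : p.Prime)
    (s n : ℕ) (hR : (p : R) ^ n = 0) {x : R} (hx : (x + 1) ^ p ^ s = 1) :
    x ^ (p ^ s * n) = 0 := by
  obtain ⟨r, hr⟩ := (Commute.one_right x).exists_add_pow_prime_pow_eq hp s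
  rw [hx, one_pow, add_right_comm] at hr
  have hxp : x ^ p ^ s = p * -(x * 1 * r) := by
    rw [mul_neg, ← mul_assoc, ← mul_assoc]
    exact eq_neg_of_add_eq_zero_left (add_eq_right.1 hr.symm)
  rw [pow_mul, hxp, (Nat.cast_commute p _).mul_pow, hR, zero_mul]

section Cyclic

variable (M : ℕ) (W : Type*) [AddCommGroup W]

def zmodShift : Module.End ℤ (ZMod M → W) := LinearMap.funLeft ℤ W (· + 1)

variable {M W}

theorem zmodShift_pow_apply (c : ℕ) (u : ZMod M → W) (a : ZMod M) :
    (zmodShift M W ^ c) u a = u (a + c) := by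
  induction c generalizing u a with
  | zero => simp
  | succ c ih =>
    rw [pow_succ, Module.End.mul_apply, ih, Nat.cast_succ, ← add_assoc]
    rfl

theorem zmodShift_pow_card : zmodShift M W ^ M = 1 := by
  ext u a
  simp [zmodShift_pow_apply]

theorem isPolyMap_zmodShift_sub_one_pow_apply [NeZero M] {N : ℕ}
    (hN : (zmodShift M W - 1) ^ N = 0) :
    ∀ k j, N ≤ j + k → ∀ u : ZMod M → W, IsPolyMap k (((zmodShift M W - 1) ^ j) u)
  | 0, j, hj, u => by
    obtain ⟨i, rfl⟩ := Nat.exists_eq_add_of_le (Nat.add_zero j ▸ hj)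
    rw [pow_add, hN, zero_mul]
    exact AddPoly.zero 0
  | k + 1, j, hj, u => by
    intro v
    set δ := zmodShift M W - 1
    -- `Δ_v = τ ^ v - 1 = (∑_{i < v} τ ^ i) * δ`, and the geometric sum commutes with `δ`
    set σ := ∑ i ∈ Finset.range v.val, zmodShift M W ^ i
    have hσ : Commute δ σ :=
      Commute.sum_right _ _ _ fun i _ =>
        ((Commute.refl _).sub_left (Commute.one_left _)).pow_right i
    have hop : δ ^ (j + 1) * σ = (zmodShift M W ^ v.val - 1) * δ ^ j := by
      rw [(hσ.pow_left (j + 1)).eq, pow_succ', ← mul_assoc, geom_sum_mul]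
    have hΔ : (fun a => (δ ^ j) u (a + v) - (δ ^ j) u a) = (δ ^ (j + 1)) (σ u) := by
      funext a
      rw [← Module.End.mul_apply, hop, Module.End.mul_apply, LinearMap.sub_apply, Pi.sub_apply,
        zmodShift_pow_apply, ZMod.natCast_zmod_val, Module.End.one_apply]
    rw [hΔ]
    exact isPolyMap_zmodShift_sub_one_pow_apply hN k (j + 1) (by omega) (σ u)

end Cyclic

theorem isPolyMap_zmod_prime_pow {W : Type*} [AddCommGroup W] {p : ℕ} (hp : p.Prime) (s n : ℕ)
    (hW : ∀ w : W, p ^ n • w = 0) (u : ZMod (p ^ s) → W) : IsPolyMap (p ^ s * n) u := by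
  have : NeZero (p ^ s) := ⟨pow_ne_zero s hp.ne_zero⟩
  have hp_pow : (p : Module.End ℤ (ZMod (p ^ s) → W)) ^ n = 0 := by
    refine LinearMap.ext fun u => funext fun a => ?_
    rw [← Nat.cast_pow, Module.End.natCast_apply, Pi.smul_apply, hW]
    rfl
  have hN := pow_mul_eq_zero_of_add_one_pow_eq_one hp s n hp_pow
    (x := zmodShift (p ^ s) W - 1) (by rw [sub_add_cancel, zmodShift_pow_card])
  simpa using isPolyMap_zmodShift_sub_one_pow_apply hN _ 0 (Nat.le_add_left _ _) u

theorem isPolyMap_fin_pi {W : Type*} [Ring W] {p : ℕ} (hp : p.Prime) (s n : ℕ)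
    (hW : ∀ w : W, p ^ n • w = 0) :
    ∀ (m : ℕ) (F : (Fin m → ZMod (p ^ s)) → W), IsPolyMap (m * (p ^ s * n) + 1) F
  | 0, F => by
    have hF : F = fun _ => F 0 := funext fun x => congrArg F (Subsingleton.elim x 0)
    rw [zero_mul, zero_add, hF]
    exact AddPoly.const _
  | m + 1, F => by
    classical
    have : NeZero (p ^ s) := ⟨pow_ne_zero s hp.ne_zero⟩
    have hF : F = fun x =>
        ∑ c, (if x (Fin.last m) = c then 1 else 0) * F (Fin.snoc (Fin.init x) c) := by
      funext x
      simp
    rw [hF]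
    refine AddPoly.sum _ fun c _ => ?_
    have hlast := (isPolyMap_zmod_prime_pow hp s n hW fun t => if t = c then (1 : W) else 0)
      |>.comp_addMonoidHom (Pi.evalAddMonoidHom (fun _ => ZMod (p ^ s)) (Fin.last m))
    have hinit := (isPolyMap_fin_pi hp s n hW m fun y => F (Fin.snoc y c)).comp_addMonoidHom
      ({ toFun := Fin.init, map_zero' := rfl, map_add' := fun _ _ => rfl } :
        (Fin (m + 1) → ZMod (p ^ s)) →+ (Fin m → ZMod (p ^ s)))
    exact (hlast.mul hinit).of_le (by ring_nf; rfl)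

def compDegree (R : ℕ) : ℕ → ℕ
  | 0 => 1
  | a + 1 => R * (compDegree R a + 1) + 1

namespace AddPoly

variable {G X A W : Type*} [AddCommGroup A] [Fintype A] [Ring W] {T : G → X → X}
  {l : Filter X}

theorem comp_isPolyMap_of_succ (hT : ∀ g, Tendsto (T g) l l)
    (hcomm : ∀ g h x, T g (T h x) = T h (T g x)) {a D : ℕ}
    (hlow : ∀ b : X → A, AddPoly T l a b → ∀ F : A → W, AddPoly T l D (fun x => F (b x)))
    {b : X → A} (hb : AddPoly T l (a + 1) b) :
    ∀ (c : ℕ) (F : A → W), IsPolyMap c F → AddPoly T l (c * (D + 1) + 1) (fun x => F (b x))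
  | 0, F, hF => by
    rw [show (fun x => F (b x)) = fun _ => 0 from funext fun x => eventually_top.1 hF (b x)]
    exact zero _
  | c + 1, F, hF => by
    classical
    intro g
    -- `Δ_g (F ∘ b) = ∑_v 1[Δ_g b = v] · (Δ_v F) ∘ b`
    have hdecomp : (fun x => F (b (T g x)) - F (b x)) = fun x =>
        ∑ v, (if b (T g x) - b x = v then 1 else 0) * (F (b x + v) - F (b x)) := by
      funext x
      simp
    rw [hdecomp]
    refine sum _ fun v _ => ?_
    have hind := hlow _ (hb g) fun y => if y = v then (1 : W) else 0
    have hdiff := comp_isPolyMap_of_succ hT hcomm hlow hb c _ (hF v)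
    exact (hind.mul hT hcomm hdiff).of_le hT (le_of_eq (by ring))

theorem comp (hT : ∀ g, Tendsto (T g) l l) (hcomm : ∀ g h x, T g (T h x) = T h (T g x))
    {R : ℕ} (hR : ∀ u : A → W, IsPolyMap R u) :
    ∀ {a : ℕ} {b : X → A}, AddPoly T l a b → ∀ F : A → W,
      AddPoly T l (compDegree R a) (fun x => F (b x))
  | 0, _, hb, F => (const (F 0)).congr hT (Eventually.mono hb fun _ hx => congrArg F hx.symm)
  | _ + 1, _, hb, F =>
    comp_isPolyMap_of_succ hT hcomm (fun _ hb' => comp hT hcomm hR hb') hb R F (hR F)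

end AddPoly

theorem phasePoly_iff_addPoly {G X H : Type*} [MeasurableSpace X] [CommGroup H]
    {T : G → X → X} {μ : Measure X} {k : ℕ} {φ : X → H} :
    PhasePoly T μ k φ ↔ AddPoly T (ae μ) k (fun x => Additive.ofMul (φ x)) := by
  induction k generalizing φ with
  | zero => exact eventually_congr (Eventually.of_forall fun x => ofMul_eq_zero.symm)
  | succ k ih =>
    refine forall_congr' fun g => ?_
    simp only [ih, ofMul_mul, ofMul_inv, ← sub_eq_add_neg]

theorem ZMod.surjOn_toCircle (N : ℕ) [NeZero N] :
    Set.SurjOn (ZMod.toCircle : ZMod N → Circle) Set.univ {z | z ^ N = 1} := fun z hz => by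
  obtain ⟨k, hk⟩ := (bijective_rootsOfUnityAddChar N).2 (rootsOfUnity.mkOfPowEq z hz)
  refine ⟨k, Set.mem_univ k, ?_⟩
  rw [← ZMod.rootsOfUnityAddChar_val, hk, rootsOfUnity.val_mkOfPowEq_coe]

theorem function_of_phase_polynomials_is_phase_polynomial_general
    (p d m n : ℕ) (hp : p.Prime) :
    ∃ C : ℕ,
      ∀ (I : Type) [Countable I] (q : I → ℕ), (∀ i, (q i).Prime) →
      ∀ (X : Type) [MeasurableSpace X] (μ : Measure X) [IsProbabilityMeasure μ]
        (T : (Π₀ i : I, ZMod (q i)) → X → X),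
        (∀ g, MeasurePreserving (T g) μ μ) → T 0 = id →
        (∀ g g', T (g + g') = T g ∘ T g') → IsErgodicAction T μ →
      ∀ (φ : Fin m → X → Circle),
        (∀ i, Measurable (φ i)) →
        (∀ i, PhasePoly T μ d (φ i)) →
        (∀ i, ∀ᵐ x ∂μ, φ i x ^ (p ^ d) = 1) →
      ∀ (F : (Fin m → Circle) → Circle),
        (∀ z : Fin m → Circle, F z ^ (p ^ n) = 1) →
        PhasePoly T μ C (fun x => F (fun i => φ i x)) := by
  refine ⟨compDegree (m * (p ^ d * n) + 1) d, ?_⟩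
  intro I _ q _ X _ μ _ T hT _ hTadd _ φ _ hφ hφ_root F hF
  have : NeZero (p ^ d) := ⟨pow_ne_zero d hp.ne_zero⟩
  have : NeZero (p ^ n) := ⟨pow_ne_zero n hp.ne_zero⟩
  have hT_ae g : Tendsto (T g) (ae μ) (ae μ) := (hT g).quasiMeasurePreserving.tendsto_ae
  have hcomm g h x : T g (T h x) = T h (T g x) := by
    rw [← Function.comp_apply (f := T g), ← hTadd, add_comm, hTadd, Function.comp_apply]
  have hlog_d := (ZMod.surjOn_toCircle (p ^ d)).rightInvOn_invFunOn
  have hlog_n := (ZMod.surjOn_toCircle (p ^ n)).rightInvOn_invFunOn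
  let b : X → Fin m → ZMod (p ^ d) := fun x i =>
    Function.invFunOn ZMod.toCircle Set.univ (φ i x)
  have hb : AddPoly T (ae μ) d b := AddPoly.pi fun i =>
    (AddPoly.map_iff ZMod.toCircle.toAddMonoidHom ZMod.injective_toCircle).1 <|
      (phasePoly_iff_addPoly.1 (hφ i)).congr hT_ae <|
        (hφ_root i).mono fun x hx => by simp [b, hlog_d hx]
  have hW (w : ZMod (p ^ n)) : p ^ n • w = 0 := by rw [nsmul_eq_mul, ZMod.natCast_self, zero_mul]
  have hfb := AddPoly.comp hT_ae hcomm (isPolyMap_fin_pi hp d n hW m) hb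
    fun a => Function.invFunOn ZMod.toCircle Set.univ (F fun i => ZMod.toCircle (a i))
  refine phasePoly_iff_addPoly.2 <| ((AddPoly.map_iff ZMod.toCircle.toAddMonoidHom
    ZMod.injective_toCircle).2 hfb).congr hT_ae ?_
  filter_upwards [ae_all_iff.2 hφ_root] with x hx
  simp [b, hlog_n (hF _), hlog_d (hx _)]

/-- For every prime `p` and integers `d, m, n ≥ 1` there is a constant
`C = C(p, d, m, n)` such that: for every ergodic `G`-system `X` with
`G = ⨁_{i∈I} ℤ/q_iℤ` (primes `q_i`, countable `I`), all phase polynomials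
`φ₁, …, φ_m : X → S¹` of degree `< d` taking values (a.e.) in the `p^d`-th roots of unity,
and every function `F` of `m` variables from `p^d`-th roots of unity to `p^n`-th roots of
unity, the composite `x ↦ F (φ₁ x, …, φ_m x)` is a phase polynomial of degree `< C`. -/
theorem function_of_phase_polynomials_is_phase_polynomial
    (p d m n : ℕ) (hp : p.Prime) (hd : 1 ≤ d) (hm : 1 ≤ m) (hn : 1 ≤ n) :
    ∃ C : ℕ,
      ∀ (I : Type) [Countable I] (q : I → ℕ), (∀ i, (q i).Prime) →
      ∀ (X : Type) [MeasurableSpace X] (μ : Measure X) [IsProbabilityMeasure μ]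
        (T : (Π₀ i : I, ZMod (q i)) → X → X),
        (∀ g, MeasurePreserving (T g) μ μ) → T 0 = id →
        (∀ g g', T (g + g') = T g ∘ T g') → IsErgodicAction T μ →
      ∀ (φ : Fin m → X → Circle),
        (∀ i, Measurable (φ i)) →
        (∀ i, PhasePoly T μ d (φ i)) →
        (∀ i, ∀ᵐ x ∂μ, φ i x ^ (p ^ d) = 1) →
      ∀ (F : (Fin m → Circle) → Circle),
        (∀ z : Fin m → Circle, F z ^ (p ^ n) = 1) →
        PhasePoly T μ C (fun x => F (fun i => φ i x)) :=
  function_of_phase_polynomials_is_phase_polynomial_general p d m n hp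
end

section
/- Let P be an infinite set of primes and let G = ⨁_{p∈P} ℤ/pℤ act on the circle S¹, equipped with its Haar probability measure μ, by T_g z = φ(g)·z, where φ((g_p)_{p∈P}) = ∏_{p∈P} e^{2πi g_p / p} (a finite product since g_p = 0 for all but finitely many p). Then this action is ergodic: every measurable set A ⊆ S¹ satisfying μ(T_g⁻¹A Δ A) = 0 for all g ∈ G has μ(A) ∈ {0, 1}. -/
open MeasureTheory
open scoped symmDiff

/-!
The generator of the `p`-th coordinate of `G` rotates the circle by `e^{2πi/p}`, a rotation of
order `p`. A set that is almost invariant under rotations of unbounded finite order is null or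
conull: near a Lebesgue density point, the arcs of length `1/n` permuted by a rotation of order
`n` all see `A` with the same density, which must then equal the total measure of `A`
(`AddCircle.ae_empty_or_univ_of_forall_vadd_ae_eq_self`). All Haar measures on `S¹` have the
same null sets, so this transfers from Lebesgue measure on `ℝ/ℤ` to `μ`.
-/

open Filter Set Real Measure
open scoped Pointwise

theorem MeasureTheory.Measure.ae_eq_of_isHaarMeasure {G : Type*} [Group G] [TopologicalSpace G]
    [IsTopologicalGroup G] [LocallyCompactSpace G] [SecondCountableTopology G]
    [MeasurableSpace G] [BorelSpace G] (μ ν : Measure G) [μ.IsHaarMeasure] [ν.IsHaarMeasure] :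
    ae μ = ae ν := by
  rw [isMulLeftInvariant_eq_smul μ ν,
    ae_smul_measure_eq (by simpa using (haarScalarFactor_pos_of_isHaarMeasure μ ν).ne')]

namespace AddCircle

variable {T : ℝ}

theorem orderOf_toCircle (hT : T ≠ 0) (u : AddCircle T) : orderOf (toCircle u) = addOrderOf u := by
  rw [← orderOf_ofAdd_eq_addOrderOf]
  exact orderOf_injective toCircle_addChar.toMonoidHom (injective_toCircle hT) _

theorem surjective_toCircle (hT : T ≠ 0) : Function.Surjective (@toCircle T) := by
  simpa only [← funext (homeomorphCircle_apply hT)] using (homeomorphCircle hT).surjective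

variable [Fact (0 < T)]

instance isHaarMeasure_map_toCircle : (volume.map (@toCircle T)).IsHaarMeasure where
  map_mul_left_eq_self c := by
    obtain ⟨u, rfl⟩ := surjective_toCircle (Fact.out : 0 < T).ne' c
    have hcomm : (toCircle u * ·) ∘ toCircle = toCircle ∘ (u + · : AddCircle T → AddCircle T) :=
      funext fun x => (toCircle_add u x).symm
    rw [map_map (by fun_prop) continuous_toCircle.measurable, hcomm,
      ← map_map continuous_toCircle.measurable (measurable_const_add u),
      map_add_left_eq_self]
  toIsOpenPosMeasure :=
    continuous_toCircle.isOpenPosMeasure_map (surjective_toCircle (Fact.out : 0 < T).ne')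

end AddCircle

theorem Circle.orderOf_exp_two_pi_div {n : ℕ} (hn : 0 < n) :
    orderOf (Circle.exp (2 * π / n)) = n := by
  have h := AddCircle.orderOf_toCircle one_ne_zero ((1 / n : ℝ) : AddCircle (1 : ℝ))
  rwa [AddCircle.toCircle_apply_mk, AddCircle.addOrderOf_period_div hn, div_one, mul_one_div] at h

theorem Circle.ae_empty_or_univ_of_forall_smul_ae_eq_self {μ : Measure Circle} [μ.IsHaarMeasure]
    {A : Set Circle} (hA : NullMeasurableSet A μ) {ι : Type*} {l : Filter ι} [l.NeBot]
    {z : ι → Circle} (hz₁ : ∀ i, (z i • A : Set Circle) =ᵐ[μ] A)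
    (hz₂ : Tendsto (orderOf ∘ z) l atTop) : A =ᵐ[μ] (∅ : Set Circle) ∨ A =ᵐ[μ] univ := by
  let e := (AddCircle.homeomorphCircle (one_ne_zero : (1 : ℝ) ≠ 0)).toMeasurableEquiv
  have he_apply : ⇑e = AddCircle.toCircle := funext (AddCircle.homeomorphCircle_apply _)
  have he_symm (c : Circle) : (e.symm c).toCircle = c := by
    rw [← he_apply]; exact e.apply_symm_apply c
  set ν : Measure Circle := volume.map (AddCircle.toCircle (T := 1))
  have he : MeasurePreserving e volume ν := by
    simpa only [ν, ← he_apply] using e.measurable.measurePreserving volume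
  have hae : ae μ = ae ν := Measure.ae_eq_of_isHaarMeasure _ _
  simp only [hae] at hz₁ ⊢
  have hA' : NullMeasurableSet A ν :=
    hA.mono_ac (Measure.ae_le_iff_absolutelyContinuous.mp hae.ge)
  have hvadd (c : Circle) : (e.symm c +ᵥ e ⁻¹' A : Set _) = e ⁻¹' (c • A) := by
    ext x
    simp only [mem_vadd_set_iff_neg_vadd_mem, mem_smul_set_iff_inv_smul_mem, mem_preimage,
      vadd_eq_add, smul_eq_mul, he_apply, AddCircle.toCircle_add, AddCircle.toCircle_neg, he_symm]
  have horder (c : Circle) : addOrderOf (e.symm c) = orderOf c := by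
    rw [← AddCircle.orderOf_toCircle one_ne_zero, he_symm]
  have key := AddCircle.ae_empty_or_univ_of_forall_vadd_ae_eq_self
    (hA'.preimage he.quasiMeasurePreserving) (u := fun i => e.symm (z i))
    (fun i => hvadd (z i) ▸ he.quasiMeasurePreserving.preimage_ae_eq (hz₁ i))
    (by simpa only [Function.comp_def, horder] using hz₂)
  have hback := (he.symm e).quasiMeasurePreserving
  exact key.imp (fun h => by simpa using hback.preimage_ae_eq h)
    (fun h => by simpa using hback.preimage_ae_eq h)

/-- Let `P` be an infinite set of primes and let `G = ⨁_{p∈P} ℤ/pℤ` act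
on the circle `S¹` (with Haar probability measure `μ`) by `T_g z = φ(g) · z`, where
`φ((g_p)_p) = ∏_p e^{2πi g_p / p}`.  Then this action is ergodic: every measurable set
`A ⊆ S¹` with `μ (T_g⁻¹ A ∆ A) = 0` for all `g` has `μ A ∈ {0, 1}`. -/
theorem circle_system_is_ergodic
    (P : Set ℕ) (hPinf : P.Infinite) (hPprime : ∀ p ∈ P, Nat.Prime p)
    (μ : Measure Circle) [μ.IsHaarMeasure] [IsProbabilityMeasure μ]
    (φ : (Π₀ p : P, ZMod (p : ℕ)) → Circle)
    (hφ : ∀ g, φ g =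
      ∏ p ∈ g.support, Circle.exp (2 * Real.pi * (((g p).val : ℝ) / ((p : ℕ) : ℝ))))
    (T : (Π₀ p : P, ZMod (p : ℕ)) → Circle → Circle)
    (hT : ∀ g z, T g z = φ g * z) :
    IsErgodicAction T μ := by
  intro A hA hA_inv
  have hφ_single (p : P) : φ (DFinsupp.single p 1) = Circle.exp (2 * π / p) := by
    have : Fact (1 < (p : ℕ)) := ⟨(hPprime p p.2).one_lt⟩
    rw [hφ, DFinsupp.support_single one_ne_zero, Finset.prod_singleton,
      DFinsupp.single_eq_same, ZMod.val_one, Nat.cast_one, mul_one_div]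
  have hT_preimage (g) : T g ⁻¹' A = (φ g)⁻¹ • A := by
    rw [funext (hT g), ← preimage_smul]; rfl
  have hz₁ (p : P) : ((φ (DFinsupp.single p 1))⁻¹ • A : Set Circle) =ᵐ[μ] A := by
    rw [← hT_preimage, ← measure_symmDiff_eq_zero_iff]; exact hA_inv _
  have hz₂ : Tendsto (fun p : P => orderOf (φ (DFinsupp.single p 1))⁻¹) cofinite atTop := by
    simp only [orderOf_inv, hφ_single,
      Circle.orderOf_exp_two_pi_div (hPprime _ (Subtype.prop _)).pos]
    exact Nat.cofinite_eq_atTop ▸ Subtype.val_injective.tendsto_cofinite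
  have : Infinite P := hPinf.to_subtype
  rcases Circle.ae_empty_or_univ_of_forall_smul_ae_eq_self hA.nullMeasurableSet hz₁ hz₂
    with h | h
  · exact Or.inl (ae_eq_empty.mp h)
  · exact Or.inr (by rw [measure_congr h, measure_univ])
end
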